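/- arXiv:2402.13390 — 2 statements merged into one kernel-verified Lean document; each statement's English description precedes it below -/
import Mathlib

section
/- Let (g, J, k) = (g1 ⋈ g2, J, k) be a Hermitian twisted cartesian product with fundamental 2-form ω(u,v) = k(Ju, v). Let ω1, ω2 be the fundamental forms of (g1, J1, k1) and (g2, J2, k2). Then the Chevalley–Eilenberg differential of ω satisfies: dω(x,y,z) = dω1(x,y,z) and dω(a,b,c) = dω2(a,b,c) for x,y,z ∈ g1, a,b,c ∈ g2, and for mixed arguments dω(x,y,c) = −ω1((ρ2*(c) + ρ2(c))x, y) and dω(x,b,c) = −ω2((ρ1*(x) + ρ1(x))b, c). -/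
open scoped BigOperators

section TCPDefs

variable {V V₁ V₂ W : Type*} [AddCommGroup V] [Module ℝ V]
  [AddCommGroup V₁] [Module ℝ V₁] [AddCommGroup V₂] [Module ℝ V₂]
  [AddCommGroup W] [Module ℝ W]

/-- Real-bilinearity of a two-argument map. -/
def IsBilinMap (f : V₁ → V₂ → W) : Prop :=
  (∀ x y z, f (x + y) z = f x z + f y z) ∧ (∀ (c : ℝ) x z, f (c • x) z = c • f x z) ∧
  (∀ x y z, f x (y + z) = f x y + f x z) ∧ (∀ (c : ℝ) x z, f x (c • z) = c • f x z)

/-- The Jacobi identity for a bracket. -/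
def Jacobi (l : V → V → V) : Prop :=
  ∀ u v w, l (l u v) w + l (l v w) u + l (l w u) v = 0

/-- A (real) Lie bracket: bilinear, antisymmetric, Jacobi. -/
def IsLieBracket (l : V → V → V) : Prop :=
  IsBilinMap l ∧ (∀ u v, l u v = -l v u) ∧ Jacobi l

/-- D is a derivation of the bracket l. -/
def IsDeriv (l : V → V → V) (D : V → V) : Prop :=
  ∀ u v, D (l u v) = l (D u) v + l u (D v)

/-- Compatibility of the couple (ρ1, ρ2). -/
def Compat (ρ1 : V₁ → V₂ → V₂) (ρ2 : V₂ → V₁ → V₁) : Prop :=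
  (∀ (x : V₁) (a b : V₂), ρ1 (ρ2 a x) b = ρ1 (ρ2 b x) a) ∧
  (∀ (x y : V₁) (a : V₂), ρ2 (ρ1 x a) y = ρ2 (ρ1 y a) x)

/-- The twisted cartesian product bracket on V₁ × V₂. -/
def twBr (l1 : V₁ → V₁ → V₁) (l2 : V₂ → V₂ → V₂)
    (ρ1 : V₁ → V₂ → V₂) (ρ2 : V₂ → V₁ → V₁) (u v : V₁ × V₂) : V₁ × V₂ :=
  (l1 u.1 v.1 + ρ2 u.2 v.1 - ρ2 v.2 u.1, l2 u.2 v.2 + ρ1 u.1 v.2 - ρ1 v.1 u.2)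

/-- The product almost complex structure. -/
def prodJ (J1 : V₁ → V₁) (J2 : V₂ → V₂) (u : V₁ × V₂) : V₁ × V₂ := (J1 u.1, J2 u.2)

/-- The product metric. -/
def prodK (k1 : V₁ → V₁ → ℝ) (k2 : V₂ → V₂ → ℝ) (u v : V₁ × V₂) : ℝ :=
  k1 u.1 v.1 + k2 u.2 v.2

/-- Nijenhuis tensor of J with respect to the bracket l. -/
def nijenhuis (l : V → V → V) (J : V → V) (u v : V) : V :=
  l (J u) (J v) - l u v - J (l (J u) v + l u (J v))

/-- Fundamental 2-form ω(u,v) = k(Ju, v). -/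
def fund (k : V → V → ℝ) (J : V → V) (u v : V) : ℝ := k (J u) v

/-- Chevalley–Eilenberg differential of a 2-form. -/
def d2 (l : V → V → V) (ω : V → V → ℝ) (u v w : V) : ℝ :=
  -ω (l u v) w + ω (l u w) v - ω (l v w) u

/-- Chevalley–Eilenberg differential of a 1-form. -/
def d1 (l : V → V → V) (θ : V → ℝ) (u v : V) : ℝ := -θ (l u v)

/-- Wedge product of a 1-form with a 2-form, evaluated on three vectors. -/
def wedge12 (θ : V → ℝ) (ω : V → V → ℝ) (u v w : V) : ℝ :=
  θ u * ω v w - θ v * ω u w + θ w * ω u v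

/-- The Koszul formula characterizing the Levi-Civita product of (g, k). -/
def IsLeviCivita (k : V → V → ℝ) (l : V → V → V) (nab : V → V → V) : Prop :=
  ∀ u v w, 2 * k (nab u v) w = k (l u v) w - k (l v w) u - k (l u w) v

/-- Codifferential of a 2-form ω relative to a family E (an orthonormal basis)
    and a Levi-Civita product nab:  d*ω(X) = −Σ_i (∇_{E_i}ω)(E_i, X). -/
def codiff {ι : Type*} [Fintype ι] (E : ι → V) (nab : V → V → V)
    (ω : V → V → ℝ) (X : V) : ℝ :=
  -∑ i, (-(ω (nab (E i) (E i)) X) - ω (E i) (nab (E i) X))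

/-- Lee form θ = −d*ω ∘ J. -/
def leeForm {ι : Type*} [Fintype ι] (E : ι → V) (nab : V → V → V)
    (k : V → V → ℝ) (J : V → V) (X : V) : ℝ :=
  -codiff E nab (fund k J) (J X)

/-- A family is orthonormal with respect to k. -/
def Orthonormal' {ι : Type*} [DecidableEq ι] (k : V → V → ℝ) (E : ι → V) : Prop :=
  ∀ i j, k (E i) (E j) = if i = j then 1 else 0

/-- k is an inner product: symmetric, bilinear, positive definite. -/
def IsInner (k : V → V → ℝ) : Prop :=
  IsBilinMap k ∧ (∀ u v, k u v = k v u) ∧ (∀ u, u ≠ 0 → 0 < k u u)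

/-- A Hermitian structure on the Lie algebra (V, l). -/
def IsHermitian (l : V → V → V) (J : V → V) (k : V → V → ℝ) : Prop :=
  IsInner k ∧ (∀ u, J (J u) = -u) ∧ (∀ u v, nijenhuis l J u v = 0) ∧
  (∀ u v, k (J u) (J v) = k u v)

end TCPDefs


/-!
On vectors of `g₁` and `g₂` the twisted bracket reduces to the brackets of the factors, and a
mixed bracket `[x, c]` is `(-ρ₂(c) x, ρ₁(x) c)`; since `ω = ω₁ ⊕ ω₂`, the differential `dω` on each
kind of triple is read off term by term. In the mixed cases two terms survive, and the one
involving `ρ₂(c) y` is turned into one involving `ρ₂*(c) x` by the identity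
`ω(D* u, v) = -ω(D v, u)`, valid for any `D` commuting with `J` because `ω` is antisymmetric.
-/

namespace IsBilinMap

variable {V₁ V₂ W : Type*} [AddCommGroup V₁] [Module ℝ V₁] [AddCommGroup V₂] [Module ℝ V₂]
  [AddCommGroup W] [Module ℝ W] {f : V₁ → V₂ → W}

def toLinearMap₂ (hf : IsBilinMap f) : V₁ →ₗ[ℝ] V₂ →ₗ[ℝ] W :=
  LinearMap.mk₂ ℝ f hf.1 hf.2.1 hf.2.2.1 hf.2.2.2

theorem zero_left (hf : IsBilinMap f) (y : V₂) : f 0 y = 0 :=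
  hf.toLinearMap₂.map_zero₂ y

theorem zero_right (hf : IsBilinMap f) (x : V₁) : f x 0 = 0 :=
  (hf.toLinearMap₂ x).map_zero

theorem neg_left (hf : IsBilinMap f) (x : V₁) (y : V₂) : f (-x) y = -f x y :=
  hf.toLinearMap₂.map_neg₂ x y

theorem add_left (hf : IsBilinMap f) (x x' : V₁) (y : V₂) : f (x + x') y = f x y + f x' y :=
  hf.toLinearMap₂.map_add₂ x x' y

theorem fund {V : Type*} [AddCommGroup V] [Module ℝ V] {k : V → V → ℝ} (hk : IsBilinMap k)
    (J : Module.End ℝ V) : IsBilinMap (fund k J) :=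
  ⟨fun x y z => by simp only [_root_.fund, map_add, hk.1],
    fun c x z => by simp only [_root_.fund, map_smul, hk.2.1],
    fun x y z => hk.2.2.1 _ y z, fun c x z => hk.2.2.2 c _ z⟩

end IsBilinMap

section FundamentalForm

variable {V : Type*} [AddCommGroup V] [Module ℝ V] {k : V → V → ℝ} {J : Module.End ℝ V}

theorem fund_antisymm (hk : IsBilinMap k) (hJJ : ∀ u, J (J u) = -u)
    (hkJ : ∀ u v, k (J u) (J v) = k u v) (hsymm : ∀ u v, k u v = k v u) (u v : V) :
    fund k J u v = -fund k J v u := by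
  calc k (J u) v = k (J (J u)) (J v) := (hkJ _ _).symm
    _ = -k (J v) u := by rw [hJJ, hk.neg_left, hsymm]

theorem fund_adjoint_apply (hk : IsBilinMap k) (hJJ : ∀ u, J (J u) = -u)
    (hkJ : ∀ u v, k (J u) (J v) = k u v) (hsymm : ∀ u v, k u v = k v u)
    {D : Module.End ℝ V} (hDJ : D * J = J * D) {Ds : V → V}
    (hDs : ∀ u v, k (Ds u) v = k u (D v)) (u v : V) :
    fund k J (Ds u) v = -fund k J (D v) u := by
  have hD : D (J v) = J (D v) := LinearMap.congr_fun hDJ v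
  rw [fund_antisymm hk hJJ hkJ hsymm]
  simp only [fund, hsymm (J v), hDs, hD, hsymm u]

end FundamentalForm

theorem fund_prodK_prodJ {V₁ V₂ : Type*} (k1 : V₁ → V₁ → ℝ) (k2 : V₂ → V₂ → ℝ)
    (J1 : V₁ → V₁) (J2 : V₂ → V₂) (u v : V₁ × V₂) :
    fund (prodK k1 k2) (prodJ J1 J2) u v = fund k1 J1 u.1 v.1 + fund k2 J2 u.2 v.2 :=
  rfl

section TwistedProduct

variable {V₁ V₂ : Type*} [AddCommGroup V₁] [Module ℝ V₁] [AddCommGroup V₂] [Module ℝ V₂]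
  {l1 : V₁ → V₁ → V₁} {l2 : V₂ → V₂ → V₂}
  (ρ1 : V₁ →ₗ[ℝ] Module.End ℝ V₂) (ρ2 : V₂ →ₗ[ℝ] Module.End ℝ V₁)

theorem twBr_inl_inl (hl2 : IsBilinMap l2) (x y : V₁) :
    twBr l1 l2 (fun x a => ρ1 x a) (fun a x => ρ2 a x) (x, 0) (y, 0) = (l1 x y, 0) := by
  simp [twBr, hl2.zero_left]

theorem twBr_inr_inr (hl1 : IsBilinMap l1) (a b : V₂) :
    twBr l1 l2 (fun x a => ρ1 x a) (fun a x => ρ2 a x) (0, a) (0, b) = (0, l2 a b) := by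
  simp [twBr, hl1.zero_left]

theorem twBr_inl_inr (hl1 : IsBilinMap l1) (hl2 : IsBilinMap l2) (x : V₁) (a : V₂) :
    twBr l1 l2 (fun x a => ρ1 x a) (fun a x => ρ2 a x) (x, 0) (0, a) = (-ρ2 a x, ρ1 x a) := by
  simp [twBr, hl1.zero_right, hl2.zero_left]

end TwistedProduct

theorem dfund_of_twisted_product_general
    {V₁ V₂ : Type*} [AddCommGroup V₁] [Module ℝ V₁]
    [AddCommGroup V₂] [Module ℝ V₂]
    (l1 : V₁ → V₁ → V₁) (l2 : V₂ → V₂ → V₂)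
    (hl1 : IsLieBracket l1) (hl2 : IsLieBracket l2)
    (J1 : Module.End ℝ V₁) (J2 : Module.End ℝ V₂)
    (k1 : V₁ → V₁ → ℝ) (k2 : V₂ → V₂ → ℝ)
    (hH1 : IsHermitian l1 (⇑J1) k1) (hH2 : IsHermitian l2 (⇑J2) k2)
    (ρ1 : V₁ →ₗ[ℝ] Module.End ℝ V₂) (ρ2 : V₂ →ₗ[ℝ] Module.End ℝ V₁)
    (hcomm1 : ∀ x : V₁, ρ1 x * J2 = J2 * ρ1 x)
    (hcomm2 : ∀ a : V₂, ρ2 a * J1 = J1 * ρ2 a)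
    (ρ1s : V₁ → V₂ → V₂) (hρ1s : ∀ x b c, k2 (ρ1s x b) c = k2 b (ρ1 x c))
    (ρ2s : V₂ → V₁ → V₁) (hρ2s : ∀ a y z, k1 (ρ2s a y) z = k1 y (ρ2 a z)) :
    (∀ x y z : V₁,
      d2 (twBr l1 l2 (fun x a => ρ1 x a) (fun a x => ρ2 a x))
        (fund (prodK k1 k2) (prodJ (⇑J1) (⇑J2))) (x, 0) (y, 0) (z, 0) =
      d2 l1 (fund k1 (⇑J1)) x y z) ∧
    (∀ a b c : V₂,
      d2 (twBr l1 l2 (fun x a => ρ1 x a) (fun a x => ρ2 a x))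
        (fund (prodK k1 k2) (prodJ (⇑J1) (⇑J2))) (0, a) (0, b) (0, c) =
      d2 l2 (fund k2 (⇑J2)) a b c) ∧
    (∀ (x y : V₁) (c : V₂),
      d2 (twBr l1 l2 (fun x a => ρ1 x a) (fun a x => ρ2 a x))
        (fund (prodK k1 k2) (prodJ (⇑J1) (⇑J2))) (x, 0) (y, 0) (0, c) =
      -(fund k1 (⇑J1)) (ρ2s c x + ρ2 c x) y) ∧
    (∀ (x : V₁) (b c : V₂),
      d2 (twBr l1 l2 (fun x a => ρ1 x a) (fun a x => ρ2 a x))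
        (fund (prodK k1 k2) (prodJ (⇑J1) (⇑J2))) (x, 0) (0, b) (0, c) =
      -(fund k2 (⇑J2)) (ρ1s x b + ρ1 x b) c) := by
  obtain ⟨⟨hk1, hsymm1, -⟩, hJJ1, -, hkJ1⟩ := hH1
  obtain ⟨⟨hk2, hsymm2, -⟩, hJJ2, -, hkJ2⟩ := hH2
  have hω1 := hk1.fund J1
  have hω2 := hk2.fund J2
  refine ⟨fun x y z => ?_, fun a b c => ?_, fun x y c => ?_, fun x b c => ?_⟩
  · simp only [d2, twBr_inl_inl ρ1 ρ2 hl2.1, fund_prodK_prodJ, hω2.zero_left, add_zero]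
  · simp only [d2, twBr_inr_inr ρ1 ρ2 hl1.1, fund_prodK_prodJ, hω1.zero_left, zero_add]
  · simp only [d2, twBr_inl_inl ρ1 ρ2 hl2.1, twBr_inl_inr ρ1 ρ2 hl1.1 hl2.1, fund_prodK_prodJ,
      hω1.zero_right, hω1.neg_left, hω1.add_left, hω2.zero_left, hω2.zero_right, add_zero,
      fund_adjoint_apply hk1 hJJ1 hkJ1 hsymm1 (hcomm2 c) (hρ2s c)]
    ring
  · simp only [d2, twBr_inr_inr ρ1 ρ2 hl1.1, twBr_inl_inr ρ1 ρ2 hl1.1 hl2.1, fund_prodK_prodJ,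
      hω1.zero_left, hω1.zero_right, hω2.zero_right, hω2.add_left,
      fund_adjoint_apply hk2 hJJ2 hkJ2 hsymm2 (hcomm1 x) (hρ1s x)]
    ring

/-- the Chevalley–Eilenberg differential of the fundamental form
of a Hermitian twisted cartesian product. -/
theorem dfund_of_twisted_product
    {V₁ V₂ : Type*} [AddCommGroup V₁] [Module ℝ V₁] [FiniteDimensional ℝ V₁]
    [AddCommGroup V₂] [Module ℝ V₂] [FiniteDimensional ℝ V₂]
    (l1 : V₁ → V₁ → V₁) (l2 : V₂ → V₂ → V₂)
    (hl1 : IsLieBracket l1) (hl2 : IsLieBracket l2)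
    (J1 : Module.End ℝ V₁) (J2 : Module.End ℝ V₂)
    (k1 : V₁ → V₁ → ℝ) (k2 : V₂ → V₂ → ℝ)
    (hH1 : IsHermitian l1 (⇑J1) k1) (hH2 : IsHermitian l2 (⇑J2) k2)
    (ρ1 : V₁ →ₗ[ℝ] Module.End ℝ V₂) (ρ2 : V₂ →ₗ[ℝ] Module.End ℝ V₁)
    (hd1 : ∀ x, IsDeriv l2 (ρ1 x)) (hd2 : ∀ a, IsDeriv l1 (ρ2 a))
    (hrep1 : ∀ x y, ρ1 (l1 x y) = ρ1 x * ρ1 y - ρ1 y * ρ1 x)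
    (hrep2 : ∀ a b, ρ2 (l2 a b) = ρ2 a * ρ2 b - ρ2 b * ρ2 a)
    (hcompat : Compat (fun x a => ρ1 x a) (fun a x => ρ2 a x))
    (hcomm1 : ∀ x : V₁, ρ1 x * J2 = J2 * ρ1 x)
    (hcomm2 : ∀ a : V₂, ρ2 a * J1 = J1 * ρ2 a)
    (ρ1s : V₁ → V₂ → V₂) (hρ1s : ∀ x b c, k2 (ρ1s x b) c = k2 b (ρ1 x c))
    (ρ2s : V₂ → V₁ → V₁) (hρ2s : ∀ a y z, k1 (ρ2s a y) z = k1 y (ρ2 a z)) :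
    (∀ x y z : V₁,
      d2 (twBr l1 l2 (fun x a => ρ1 x a) (fun a x => ρ2 a x))
        (fund (prodK k1 k2) (prodJ (⇑J1) (⇑J2))) (x, 0) (y, 0) (z, 0) =
      d2 l1 (fund k1 (⇑J1)) x y z) ∧
    (∀ a b c : V₂,
      d2 (twBr l1 l2 (fun x a => ρ1 x a) (fun a x => ρ2 a x))
        (fund (prodK k1 k2) (prodJ (⇑J1) (⇑J2))) (0, a) (0, b) (0, c) =
      d2 l2 (fund k2 (⇑J2)) a b c) ∧
    (∀ (x y : V₁) (c : V₂),
      d2 (twBr l1 l2 (fun x a => ρ1 x a) (fun a x => ρ2 a x))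
        (fund (prodK k1 k2) (prodJ (⇑J1) (⇑J2))) (x, 0) (y, 0) (0, c) =
      -(fund k1 (⇑J1)) (ρ2s c x + ρ2 c x) y) ∧
    (∀ (x : V₁) (b c : V₂),
      d2 (twBr l1 l2 (fun x a => ρ1 x a) (fun a x => ρ2 a x))
        (fund (prodK k1 k2) (prodJ (⇑J1) (⇑J2))) (x, 0) (0, b) (0, c) =
      -(fund k2 (⇑J2)) (ρ1s x b + ρ1 x b) c) :=
  dfund_of_twisted_product_general l1 l2 hl1 hl2 J1 J2 k1 k2 hH1 hH2 ρ1 ρ2 hcomm1 hcomm2 ρ1s hρ1s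
    ρ2s hρ2s
end

section
/- A Hermitian twisted cartesian product (g1 ⋈ g2, J, k) is balanced (Lee form θ ≡ 0) if and only if θ1(x) = tr(ρ1(x)) for all x ∈ g1 and θ2(a) = tr(ρ2(a)) for all a ∈ g2, where θ1, θ2 are the Lee forms of the factors. -/
open scoped BigOperators

/-!
Eliminating the Levi-Civita product by the Koszul formula writes the Lee form as a sum, over an
orthonormal basis, of terms involving only the bracket, the metric and `J`. For the basis of
`g₁ ⋈ g₂` adapted to the splitting, the twisted part of the bracket contributes `-k₁(ρ₂(a) eᵢ, eᵢ)`
and `-k₂(ρ₁(x) fⱼ, fⱼ)`, which sum to `-tr ρ₂(a)` and `-tr ρ₁(x)`. Hence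
`θ(x, a) = (θ₁(x) - tr ρ₁(x)) + (θ₂(a) - tr ρ₂(a))`, and both summands vanish at `0`.
-/

section Bilinear

variable {V V₁ V₂ W : Type*} [AddCommGroup V] [Module ℝ V]
  [AddCommGroup V₁] [Module ℝ V₁] [AddCommGroup V₂] [Module ℝ V₂]
  [AddCommGroup W] [Module ℝ W]

def IsBilinMap.toLinearMap₂_s7 {f : V₁ → V₂ → W} (h : IsBilinMap f) : V₁ →ₗ[ℝ] V₂ →ₗ[ℝ] W :=
  LinearMap.mk₂ ℝ f h.1 h.2.1 h.2.2.1 h.2.2.2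

lemma IsBilinMap.zero_left_s7 {f : V₁ → V₂ → W} (h : IsBilinMap f) (y : V₂) : f 0 y = 0 :=
  h.toLinearMap₂_s7.map_zero₂ y

lemma IsBilinMap.zero_right_s7 {f : V₁ → V₂ → W} (h : IsBilinMap f) (x : V₁) : f x 0 = 0 :=
  (h.toLinearMap₂_s7 x).map_zero

lemma IsBilinMap.neg_left_s7 {f : V₁ → V₂ → W} (h : IsBilinMap f) (x : V₁) (y : V₂) :
    f (-x) y = -f x y :=
  h.toLinearMap₂_s7.map_neg₂ x y

lemma IsBilinMap.sub_left {f : V₁ → V₂ → W} (h : IsBilinMap f) (x x' : V₁) (y : V₂) :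
    f (x - x') y = f x y - f x' y :=
  h.toLinearMap₂_s7.map_sub₂ x x' y

lemma IsBilinMap.sum_left {f : V₁ → V₂ → W} (h : IsBilinMap f) {ι : Type*} (s : Finset ι)
    (x : ι → V₁) (y : V₂) : f (∑ i ∈ s, x i) y = ∑ i ∈ s, f (x i) y :=
  h.toLinearMap₂_s7.map_sum₂ s x y

lemma IsBilinMap.prodK {k₁ : V₁ → V₁ → ℝ} {k₂ : V₂ → V₂ → ℝ} (h₁ : IsBilinMap k₁)
    (h₂ : IsBilinMap k₂) : IsBilinMap (prodK k₁ k₂) := by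
  refine ⟨fun u v w => ?_, fun c u w => ?_, fun u v w => ?_, fun c u w => ?_⟩ <;>
    simp only [_root_.prodK, Prod.fst_add, Prod.snd_add, Prod.smul_fst, Prod.smul_snd, h₁.1,
      h₂.1, h₁.2.1, h₂.2.1, h₁.2.2.1, h₂.2.2.1, h₁.2.2.2, h₂.2.2.2, smul_eq_mul] <;> ring

lemma IsBilinMap.apply_left_eq_neg_apply_right {k : V → V → ℝ} {J : V → V}
    (hk : IsBilinMap k) (hJJ : ∀ u, J (J u) = -u) (hJk : ∀ u v, k (J u) (J v) = k u v)
    (u v : V) : k (J u) v = -k u (J v) := by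
  rw [← hJk (J u) v, hJJ, hk.neg_left_s7]

lemma IsLieBracket.apply_self {l : V → V → V} (h : IsLieBracket l) (u : V) : l u u = 0 := by
  linear_combination (norm := module) (2⁻¹ : ℝ) • h.2.1 u u

end Bilinear

/-- The term contributed by a vector `e` of an orthonormal family to `θ(X)`, once the
Levi-Civita products in `-d*ω(JX)` are expressed through the Koszul formula. -/
noncomputable def leeSummand {V : Type*} (l : V → V → V) (k : V → V → ℝ) (J : V → V)
    (e X : V) : ℝ :=
  k (l e X) e - (k (l e (J X)) (J e) - k (l (J X) (J e)) e - k (l e (J e)) (J X)) / 2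

lemma leeSummand_map {V W : Type*} {l : V → V → V} {k : V → V → ℝ} {J : V → V} {l' : W → W → W}
    {k' : W → W → ℝ} {J' : W → W} (φ : V → W) (hl : ∀ u v, φ (l u v) = l' (φ u) (φ v))
    (hk : ∀ u v, k' (φ u) (φ v) = k u v) (hJ : ∀ u, φ (J u) = J' (φ u)) (e X : V) :
    leeSummand l' k' J' (φ e) (φ X) = leeSummand l k J e X := by
  simp only [leeSummand, ← hJ, ← hl, hk]

section LeeForm

variable {V : Type*} [AddCommGroup V] [Module ℝ V]

lemma leeForm_eq_sum_leeSummand {ι : Type*} [Fintype ι] {l : V → V → V} {k : V → V → ℝ}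
    {J : V → V} {nab : V → V → V} (hk : IsBilinMap k) (hsymm : ∀ u v, k u v = k v u)
    (hJk : ∀ u v, k (J u) (J v) = k u v) (hl : ∀ u, l u u = 0)
    (hnab : IsLeviCivita k l nab) (E : ι → V) (X : V) :
    leeForm E nab k J X = ∑ i, leeSummand l k J (E i) X := by
  unfold leeForm codiff fund
  rw [neg_neg]
  refine Finset.sum_congr rfl fun i _ => ?_
  have hEE := hnab (E i) (E i) X
  have hEJX := hnab (E i) (J X) (J (E i))
  rw [hl, hk.zero_left_s7] at hEE
  rw [leeSummand, hJk, hsymm (J (E i))]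
  linarith

lemma leeSummand_zero_right {l : V → V → V} {k : V → V → ℝ} (hl : IsBilinMap l)
    (hk : IsBilinMap k) (J : Module.End ℝ V) (e : V) : leeSummand l k J e 0 = 0 := by
  simp only [leeSummand, map_zero, hl.zero_left_s7, hl.zero_right_s7, hk.zero_left_s7, hk.zero_right_s7]
  ring

lemma leeForm_zero {ι : Type*} [Fintype ι] {l : V → V → V} {k : V → V → ℝ}
    {J : Module.End ℝ V} {nab : V → V → V} (hl : IsLieBracket l) (hH : IsHermitian l J k)
    (hnab : IsLeviCivita k l nab) (E : ι → V) : leeForm E nab k J 0 = 0 := by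
  rw [leeForm_eq_sum_leeSummand hH.1.1 hH.1.2.1 hH.2.2.2 hl.apply_self hnab]
  simp only [leeSummand_zero_right hl.1 hH.1.1, Finset.sum_const_zero]

end LeeForm

lemma Orthonormal'.repr_apply {V ι : Type*} [AddCommGroup V] [Module ℝ V] [Fintype ι]
    [DecidableEq ι] {k : V → V → ℝ} {b : Module.Basis ι ℝ V} (hb : Orthonormal' k b)
    (hk : IsBilinMap k) (v : V) (j : ι) : b.repr v j = k v (b j) := by
  conv_rhs => rw [← b.sum_repr v]
  rw [hk.sum_left]
  simp [hk.2.1, fun i => hb i j]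

lemma Orthonormal'.trace_eq_sum {V ι : Type*} [AddCommGroup V] [Module ℝ V] [Fintype ι]
    [DecidableEq ι] {k : V → V → ℝ} {b : Module.Basis ι ℝ V} (hb : Orthonormal' k b)
    (hk : IsBilinMap k) (A : Module.End ℝ V) :
    LinearMap.trace ℝ V A = ∑ j, k (A (b j)) (b j) := by
  simp [LinearMap.trace_eq_matrix_trace ℝ b, Matrix.trace, LinearMap.toMatrix_apply,
    hb.repr_apply hk]

section TwistedProduct

variable {V₁ V₂ : Type*}

lemma twBr_self [AddCommGroup V₁] [AddCommGroup V₂] {l1 : V₁ → V₁ → V₁} {l2 : V₂ → V₂ → V₂}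
    (hl1 : ∀ x, l1 x x = 0) (hl2 : ∀ a, l2 a a = 0) (ρ1 : V₁ → V₂ → V₂) (ρ2 : V₂ → V₁ → V₁)
    (u : V₁ × V₂) :
    twBr l1 l2 ρ1 ρ2 u u = 0 := by
  simp [twBr, hl1, hl2]

lemma prodK_comm {k1 : V₁ → V₁ → ℝ} {k2 : V₂ → V₂ → ℝ} (hk1 : ∀ x y, k1 x y = k1 y x)
    (hk2 : ∀ a b, k2 a b = k2 b a) (u v : V₁ × V₂) : prodK k1 k2 u v = prodK k1 k2 v u := by
  simp only [prodK, hk1 u.1, hk2 u.2]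

lemma prodK_prodJ {k1 : V₁ → V₁ → ℝ} {k2 : V₂ → V₂ → ℝ} {J1 : V₁ → V₁} {J2 : V₂ → V₂}
    (hJk1 : ∀ x y, k1 (J1 x) (J1 y) = k1 x y) (hJk2 : ∀ a b, k2 (J2 a) (J2 b) = k2 a b)
    (u v : V₁ × V₂) : prodK k1 k2 (prodJ J1 J2 u) (prodJ J1 J2 v) = prodK k1 k2 u v := by
  simp only [prodK, prodJ, hJk1, hJk2]

/-- In the term of a basis vector `(e, 0)`, the `J`-dependent contributions of `ρ₂` cancel because
`ρ₂(Ja)` commutes with `J₁`, which is skew for `k₁`. -/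
lemma leeSummand_twBr_inl [AddCommGroup V₁] [Module ℝ V₁] [AddCommGroup V₂] [Module ℝ V₂]
    {l1 : V₁ → V₁ → V₁} {l2 : V₂ → V₂ → V₂} {k1 : V₁ → V₁ → ℝ}
    {k2 : V₂ → V₂ → ℝ} {J1 : Module.End ℝ V₁} {J2 : Module.End ℝ V₂}
    {ρ1 : V₁ →ₗ[ℝ] Module.End ℝ V₂} {ρ2 : V₂ →ₗ[ℝ] Module.End ℝ V₁}
    (hl2 : IsBilinMap l2) (hk1 : IsBilinMap k1) (hk2 : IsBilinMap k2)
    (hJ1 : ∀ x y, k1 (J1 x) y = -k1 x (J1 y)) (hcomm : ∀ a, ρ2 a * J1 = J1 * ρ2 a)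
    (e x : V₁) (a : V₂) :
    leeSummand (twBr l1 l2 (fun x a => ρ1 x a) (fun a x => ρ2 a x)) (prodK k1 k2)
        (prodJ J1 J2) (e, 0) (x, a) = leeSummand l1 k1 J1 e x - k1 (ρ2 a e) e := by
  have hcancel : k1 (ρ2 (J2 a) (J1 e)) e = -k1 (ρ2 (J2 a) e) (J1 e) := by
    rw [← Module.End.mul_apply, hcomm, Module.End.mul_apply, hJ1]
  simp only [leeSummand, twBr, prodJ, prodK, map_zero, LinearMap.zero_apply, add_zero,
    sub_zero, zero_sub, hl2.zero_left_s7, hl2.zero_right_s7, hk2.zero_left_s7, hk2.zero_right_s7,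
    hk1.1, hk1.sub_left, hcancel]
  ring

lemma leeSummand_twBr_inr [AddCommGroup V₁] [Module ℝ V₁] [AddCommGroup V₂] [Module ℝ V₂]
    {l1 : V₁ → V₁ → V₁} {l2 : V₂ → V₂ → V₂} {k1 : V₁ → V₁ → ℝ}
    {k2 : V₂ → V₂ → ℝ} {J1 : Module.End ℝ V₁} {J2 : Module.End ℝ V₂}
    {ρ1 : V₁ →ₗ[ℝ] Module.End ℝ V₂} {ρ2 : V₂ →ₗ[ℝ] Module.End ℝ V₁}
    (hl1 : IsBilinMap l1) (hk1 : IsBilinMap k1) (hk2 : IsBilinMap k2)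
    (hJ2 : ∀ a b, k2 (J2 a) b = -k2 a (J2 b)) (hcomm : ∀ x, ρ1 x * J2 = J2 * ρ1 x)
    (f : V₂) (x : V₁) (a : V₂) :
    leeSummand (twBr l1 l2 (fun x a => ρ1 x a) (fun a x => ρ2 a x)) (prodK k1 k2)
        (prodJ J1 J2) (0, f) (x, a) = leeSummand l2 k2 J2 f a - k2 (ρ1 x f) f := by
  rw [← leeSummand_map (l := twBr l1 l2 (fun x a => ρ1 x a) (fun a x => ρ2 a x))
    (k := prodK k1 k2) (J := prodJ J1 J2)
    (l' := twBr l2 l1 (fun a x => ρ2 a x) (fun x a => ρ1 x a)) (k' := prodK k2 k1)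
    (J' := prodJ J2 J1) Prod.swap (fun _ _ => rfl) (fun _ _ => add_comm _ _)
    (fun _ => rfl)]
  exact leeSummand_twBr_inl hl1 hk2 hk1 hJ2 hcomm f a x

lemma leeForm_twBr [AddCommGroup V₁] [Module ℝ V₁] [AddCommGroup V₂]
    [Module ℝ V₂] {l1 : V₁ → V₁ → V₁} {l2 : V₂ → V₂ → V₂} {J1 : Module.End ℝ V₁}
    {J2 : Module.End ℝ V₂} {k1 : V₁ → V₁ → ℝ} {k2 : V₂ → V₂ → ℝ}
    (hl1 : IsLieBracket l1) (hl2 : IsLieBracket l2)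
    (hH1 : IsHermitian l1 J1 k1) (hH2 : IsHermitian l2 J2 k2)
    {ρ1 : V₁ →ₗ[ℝ] Module.End ℝ V₂} {ρ2 : V₂ →ₗ[ℝ] Module.End ℝ V₁}
    (hcomm1 : ∀ x, ρ1 x * J2 = J2 * ρ1 x) (hcomm2 : ∀ a, ρ2 a * J1 = J1 * ρ2 a)
    {ι₁ ι₂ : Type*} [Fintype ι₁] [DecidableEq ι₁] [Fintype ι₂] [DecidableEq ι₂]
    {b1 : Module.Basis ι₁ ℝ V₁} (hb1 : Orthonormal' k1 b1)
    {b2 : Module.Basis ι₂ ℝ V₂} (hb2 : Orthonormal' k2 b2)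
    {nab1 : V₁ → V₁ → V₁} (hnab1 : IsLeviCivita k1 l1 nab1)
    {nab2 : V₂ → V₂ → V₂} (hnab2 : IsLeviCivita k2 l2 nab2)
    {nab : V₁ × V₂ → V₁ × V₂ → V₁ × V₂}
    (hnab : IsLeviCivita (prodK k1 k2) (twBr l1 l2 (fun x a => ρ1 x a) (fun a x => ρ2 a x)) nab)
    (x : V₁) (a : V₂) :
    leeForm (Sum.elim (fun i => (b1 i, 0)) (fun j => (0, b2 j))) nab (prodK k1 k2)
        (prodJ J1 J2) (x, a)
      = (leeForm b1 nab1 k1 J1 x - LinearMap.trace ℝ V₂ (ρ1 x))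
        + (leeForm b2 nab2 k2 J2 a - LinearMap.trace ℝ V₁ (ρ2 a)) := by
  obtain ⟨⟨hk1, hsymm1, -⟩, hJJ1, -, hJk1⟩ := hH1
  obtain ⟨⟨hk2, hsymm2, -⟩, hJJ2, -, hJk2⟩ := hH2
  rw [leeForm_eq_sum_leeSummand (hk1.prodK hk2) (prodK_comm hsymm1 hsymm2)
      (prodK_prodJ hJk1 hJk2) (twBr_self hl1.apply_self hl2.apply_self _ _) hnab,
    leeForm_eq_sum_leeSummand hk1 hsymm1 hJk1 hl1.apply_self hnab1,
    leeForm_eq_sum_leeSummand hk2 hsymm2 hJk2 hl2.apply_self hnab2,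
    hb1.trace_eq_sum hk1, hb2.trace_eq_sum hk2, Fintype.sum_sum_type]
  simp only [Sum.elim_inl, Sum.elim_inr,
    leeSummand_twBr_inl hl2.1 hk1 hk2 (hk1.apply_left_eq_neg_apply_right hJJ1 hJk1) hcomm2,
    leeSummand_twBr_inr hl1.1 hk1 hk2 (hk2.apply_left_eq_neg_apply_right hJJ2 hJk2) hcomm1,
    Finset.sum_sub_distrib]
  ring

end TwistedProduct

lemma forall_forall_add_eq_zero_iff {α β M : Type*} [Zero α] [Zero β] [AddZeroClass M]
    {f : α → M} {g : β → M} (hf : f 0 = 0) (hg : g 0 = 0) :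
    (∀ x y, f x + g y = 0) ↔ (∀ x, f x = 0) ∧ ∀ y, g y = 0 :=
  ⟨fun h => ⟨fun x => by simpa [hg] using h x 0, fun y => by simpa [hf] using h 0 y⟩,
    fun h x y => by simp [h.1 x, h.2 y]⟩

theorem balanced_iff_of_twisted_product_general
    {V₁ V₂ : Type*} [AddCommGroup V₁] [Module ℝ V₁]
    [AddCommGroup V₂] [Module ℝ V₂]
    (l1 : V₁ → V₁ → V₁) (l2 : V₂ → V₂ → V₂)
    (hl1 : IsLieBracket l1) (hl2 : IsLieBracket l2)
    (J1 : Module.End ℝ V₁) (J2 : Module.End ℝ V₂)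
    (k1 : V₁ → V₁ → ℝ) (k2 : V₂ → V₂ → ℝ)
    (hH1 : IsHermitian l1 (⇑J1) k1) (hH2 : IsHermitian l2 (⇑J2) k2)
    (ρ1 : V₁ →ₗ[ℝ] Module.End ℝ V₂) (ρ2 : V₂ →ₗ[ℝ] Module.End ℝ V₁)
    (hcomm1 : ∀ x : V₁, ρ1 x * J2 = J2 * ρ1 x)
    (hcomm2 : ∀ a : V₂, ρ2 a * J1 = J1 * ρ2 a)
    {ι₁ ι₂ : Type*} [Fintype ι₁] [DecidableEq ι₁] [Fintype ι₂] [DecidableEq ι₂]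
    (b1 : Module.Basis ι₁ ℝ V₁) (hb1 : Orthonormal' k1 ⇑b1)
    (b2 : Module.Basis ι₂ ℝ V₂) (hb2 : Orthonormal' k2 ⇑b2)
    (nab1 : V₁ → V₁ → V₁) (hnab1 : IsLeviCivita k1 l1 nab1)
    (nab2 : V₂ → V₂ → V₂) (hnab2 : IsLeviCivita k2 l2 nab2)
    (nab : V₁ × V₂ → V₁ × V₂ → V₁ × V₂)
    (hnab : IsLeviCivita (prodK k1 k2)
      (twBr l1 l2 (fun x a => ρ1 x a) (fun a x => ρ2 a x)) nab)
    :
    (∀ X : V₁ × V₂,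
      leeForm (Sum.elim (fun i => ((b1 i : V₁), (0 : V₂)))
          (fun j => ((0 : V₁), (b2 j : V₂)))) nab (prodK k1 k2)
          (prodJ (⇑J1) (⇑J2)) X = 0) ↔
      ((∀ x : V₁, leeForm (⇑b1) nab1 k1 (⇑J1) x = LinearMap.trace ℝ V₂ (ρ1 x)) ∧
       (∀ a : V₂, leeForm (⇑b2) nab2 k2 (⇑J2) a = LinearMap.trace ℝ V₁ (ρ2 a))) := by
  simp only [Prod.forall, leeForm_twBr hl1 hl2 hH1 hH2 hcomm1 hcomm2 hb1 hb2 hnab1 hnab2 hnab]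
  rw [forall_forall_add_eq_zero_iff (by simp [leeForm_zero hl1 hH1 hnab1])
    (by simp [leeForm_zero hl2 hH2 hnab2])]
  simp only [sub_eq_zero]

/-- a Hermitian twisted cartesian product is balanced iff
θ1 = tr ∘ ρ1 and θ2 = tr ∘ ρ2. -/
theorem balanced_iff_of_twisted_product
    {V₁ V₂ : Type*} [AddCommGroup V₁] [Module ℝ V₁] [FiniteDimensional ℝ V₁]
    [AddCommGroup V₂] [Module ℝ V₂] [FiniteDimensional ℝ V₂]
    (l1 : V₁ → V₁ → V₁) (l2 : V₂ → V₂ → V₂)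
    (hl1 : IsLieBracket l1) (hl2 : IsLieBracket l2)
    (J1 : Module.End ℝ V₁) (J2 : Module.End ℝ V₂)
    (k1 : V₁ → V₁ → ℝ) (k2 : V₂ → V₂ → ℝ)
    (hH1 : IsHermitian l1 (⇑J1) k1) (hH2 : IsHermitian l2 (⇑J2) k2)
    (ρ1 : V₁ →ₗ[ℝ] Module.End ℝ V₂) (ρ2 : V₂ →ₗ[ℝ] Module.End ℝ V₁)
    (hd1 : ∀ x, IsDeriv l2 (ρ1 x)) (hd2 : ∀ a, IsDeriv l1 (ρ2 a))
    (hrep1 : ∀ x y, ρ1 (l1 x y) = ρ1 x * ρ1 y - ρ1 y * ρ1 x)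
    (hrep2 : ∀ a b, ρ2 (l2 a b) = ρ2 a * ρ2 b - ρ2 b * ρ2 a)
    (hcompat : Compat (fun x a => ρ1 x a) (fun a x => ρ2 a x))
    (hcomm1 : ∀ x : V₁, ρ1 x * J2 = J2 * ρ1 x)
    (hcomm2 : ∀ a : V₂, ρ2 a * J1 = J1 * ρ2 a)
    {ι₁ ι₂ : Type*} [Fintype ι₁] [DecidableEq ι₁] [Fintype ι₂] [DecidableEq ι₂]
    (b1 : Module.Basis ι₁ ℝ V₁) (hb1 : Orthonormal' k1 ⇑b1)
    (b2 : Module.Basis ι₂ ℝ V₂) (hb2 : Orthonormal' k2 ⇑b2)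
    (nab1 : V₁ → V₁ → V₁) (hnab1 : IsLeviCivita k1 l1 nab1)
    (nab2 : V₂ → V₂ → V₂) (hnab2 : IsLeviCivita k2 l2 nab2)
    (nab : V₁ × V₂ → V₁ × V₂ → V₁ × V₂)
    (hnab : IsLeviCivita (prodK k1 k2)
      (twBr l1 l2 (fun x a => ρ1 x a) (fun a x => ρ2 a x)) nab)
    :
    (∀ X : V₁ × V₂,
      leeForm (Sum.elim (fun i => ((b1 i : V₁), (0 : V₂)))
          (fun j => ((0 : V₁), (b2 j : V₂)))) nab (prodK k1 k2)
          (prodJ (⇑J1) (⇑J2)) X = 0) ↔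
      ((∀ x : V₁, leeForm (⇑b1) nab1 k1 (⇑J1) x = LinearMap.trace ℝ V₂ (ρ1 x)) ∧
       (∀ a : V₂, leeForm (⇑b2) nab2 k2 (⇑J2) a = LinearMap.trace ℝ V₁ (ρ2 a))) :=
  balanced_iff_of_twisted_product_general l1 l2 hl1 hl2 J1 J2 k1 k2 hH1 hH2 ρ1 ρ2 hcomm1 hcomm2 b1
    hb1 b2 hb2 nab1 hnab1 nab2 hnab2 nab hnab
end
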